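/- Let X ∈ V and Y ∈ W be independent integrable random vectors in Euclidean spaces. Then for every u ∈ V ⊗ W, the support function of K(X ⊗ Y) satisfies h_{K(X⊗Y)}(u) = E_Y[h_{K(X)}(T_Y(u))], where T_y = id_V ⊗ ⟨·, y⟩ : V ⊗ W → V. Consequently K(X ⊗ Y) depends only on K(X) and K(Y). -/

import Mathlib

open MeasureTheory ProbabilityTheory

noncomputable def suppFn {Ω : Type*} [MeasurableSpace Ω] (μ : Measure Ω)
    {V : Type*} [NormedAddCommGroup V] [InnerProductSpace ℝ V]
    (X : Ω → V) (v : V) : ℝ :=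
  (1 / 2) * ∫ ω, |(inner ℝ v (X ω) : ℝ)| ∂μ

/-- The tensor product `V ⊗ W ≅ ℝ^{m×n}` realized concretely: `(x ⊗ y)_{ij} = x_i y_j`. -/
noncomputable def tensorE {m n : ℕ} (x : EuclideanSpace ℝ (Fin m)) (y : EuclideanSpace ℝ (Fin n)) :
    EuclideanSpace ℝ (Fin m × Fin n) :=
  (WithLp.equiv 2 (Fin m × Fin n → ℝ)).symm fun p => x p.1 * y p.2

/-- The contraction `T_y = id ⊗ ⟨·, y⟩ : V ⊗ W → V`. -/
noncomputable def contractE {m n : ℕ} (y : EuclideanSpace ℝ (Fin n))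
    (u : EuclideanSpace ℝ (Fin m × Fin n)) : EuclideanSpace ℝ (Fin m) :=
  (WithLp.equiv 2 (Fin m → ℝ)).symm fun i => ∑ j, u (i, j) * y j

/-!
Independence turns the law of `(X, Y)` into the product of the laws of `X` and `Y`, so
`h_{K(X ⊗ Y)}(u) = ½ E|⟨u, X ⊗ Y⟩|` may be computed with `X` and `Y` living on two independent
copies of the sample space. Since `⟨u, x ⊗ y⟩ = ⟨T_y u, x⟩`, integrating out `X` first gives
`E_Y[h_{K(X)}(T_Y u)]`; integrating out `Y` first gives the symmetric formula in terms of
`h_{K(Y)}`. By Fubini both iterated integrals agree, so one may replace `X` by any `X'` with the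
same zonoid and then `Y` by any `Y'` with the same zonoid without changing the value.
-/

theorem ProbabilityTheory.IndepFun.integral_comp_eq_integral_prod
    {Ω E F G : Type*} [MeasurableSpace Ω] {μ : Measure Ω} [IsFiniteMeasure μ]
    [MeasurableSpace E] [MeasurableSpace F] [NormedAddCommGroup G] [NormedSpace ℝ G]
    {X : Ω → E} {Y : Ω → F} (hXm : Measurable X) (hYm : Measurable Y) (hXY : IndepFun X Y μ)
    {g : E × F → G} (hg : StronglyMeasurable g) :
    ∫ ω, g (X ω, Y ω) ∂μ = ∫ p, g (X p.1, Y p.2) ∂(μ.prod μ) := calc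
  ∫ ω, g (X ω, Y ω) ∂μ = ∫ q, g q ∂(μ.map fun ω => (X ω, Y ω)) :=
    (integral_map (hXm.prodMk hYm).aemeasurable hg.aestronglyMeasurable).symm
  _ = ∫ q, g q ∂((μ.prod μ).map (Prod.map X Y)) := by
    rw [hXY.map_prod_eq_prod_map_map hXm.aemeasurable hYm.aemeasurable,
      Measure.map_prod_map μ μ hXm hYm]
  _ = ∫ p, g (X p.1, Y p.2) ∂(μ.prod μ) :=
    integral_map (hXm.prodMap hYm).aemeasurable hg.aestronglyMeasurable

/-- The contraction `⟨·, x⟩ ⊗ id : V ⊗ W → W`. -/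
noncomputable def contractLeftE {m n : ℕ} (x : EuclideanSpace ℝ (Fin m))
    (u : EuclideanSpace ℝ (Fin m × Fin n)) : EuclideanSpace ℝ (Fin n) :=
  (WithLp.equiv 2 (Fin n → ℝ)).symm fun j => ∑ i, u (i, j) * x i

section Tensor

variable {m n : ℕ}

theorem inner_tensorE_eq_inner_contractE (u : EuclideanSpace ℝ (Fin m × Fin n))
    (x : EuclideanSpace ℝ (Fin m)) (y : EuclideanSpace ℝ (Fin n)) :
    inner ℝ u (tensorE x y) = inner ℝ (contractE y u) x := by
  simp only [tensorE, contractE, PiLp.inner_apply, RCLike.inner_apply, conj_trivial,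
    WithLp.equiv_symm_apply, Fintype.sum_prod_type]
  refine Finset.sum_congr rfl fun i _ => ?_
  rw [Finset.mul_sum]
  exact Finset.sum_congr rfl fun j _ => by ring

theorem inner_tensorE_eq_inner_contractLeftE (u : EuclideanSpace ℝ (Fin m × Fin n))
    (x : EuclideanSpace ℝ (Fin m)) (y : EuclideanSpace ℝ (Fin n)) :
    inner ℝ u (tensorE x y) = inner ℝ (contractLeftE x u) y := by
  simp only [tensorE, contractLeftE, PiLp.inner_apply, RCLike.inner_apply, conj_trivial,
    WithLp.equiv_symm_apply, Fintype.sum_prod_type]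
  rw [Finset.sum_comm]
  refine Finset.sum_congr rfl fun j _ => ?_
  rw [Finset.mul_sum]
  exact Finset.sum_congr rfl fun i _ => by ring

theorem norm_tensorE (x : EuclideanSpace ℝ (Fin m)) (y : EuclideanSpace ℝ (Fin n)) :
    ‖tensorE x y‖ = ‖x‖ * ‖y‖ := by
  rw [EuclideanSpace.norm_eq, EuclideanSpace.norm_eq, EuclideanSpace.norm_eq,
    ← Real.sqrt_mul (by positivity)]
  simp only [tensorE, WithLp.equiv_symm_apply, PiLp.toLp_apply, Fintype.sum_prod_type,
    norm_mul, mul_pow, Finset.sum_mul, Finset.mul_sum]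
  rw [Finset.sum_comm]

theorem continuous_tensorE :
    Continuous fun p : EuclideanSpace ℝ (Fin m) × EuclideanSpace ℝ (Fin n) =>
      tensorE p.1 p.2 :=
  (PiLp.continuous_toLp 2 _).comp <| continuous_pi fun q =>
    ((EuclideanSpace.proj q.1).continuous.comp continuous_fst).mul
      ((EuclideanSpace.proj q.2).continuous.comp continuous_snd)

end Tensor

section ZonoidTensor

variable {Ω Ω' : Type*} [MeasurableSpace Ω] [MeasurableSpace Ω'] {μ : Measure Ω} {ν : Measure Ω'}
  {m n : ℕ}

theorem continuous_abs_inner_tensorE (u : EuclideanSpace ℝ (Fin m × Fin n)) :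
    Continuous fun p : EuclideanSpace ℝ (Fin m) × EuclideanSpace ℝ (Fin n) =>
      |inner ℝ u (tensorE p.1 p.2)| :=
  continuous_abs.comp (continuous_const.inner continuous_tensorE)

theorem suppFn_tensorE_eq_suppFn_prod_of_indepFun [IsFiniteMeasure μ]
    {X : Ω → EuclideanSpace ℝ (Fin m)} {Y : Ω → EuclideanSpace ℝ (Fin n)}
    (hXm : Measurable X) (hYm : Measurable Y) (hXY : IndepFun X Y μ)
    (u : EuclideanSpace ℝ (Fin m × Fin n)) :
    suppFn μ (fun ω => tensorE (X ω) (Y ω)) u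
      = suppFn (μ.prod μ) (fun p => tensorE (X p.1) (Y p.2)) u := by
  unfold suppFn
  exact congrArg _ (hXY.integral_comp_eq_integral_prod hXm hYm
    (continuous_abs_inner_tensorE u).stronglyMeasurable)

theorem integrable_abs_inner_tensorE_prod
    {X : Ω → EuclideanSpace ℝ (Fin m)} {Y : Ω' → EuclideanSpace ℝ (Fin n)}
    (hX : Integrable X μ) (hY : Integrable Y ν) (u : EuclideanSpace ℝ (Fin m × Fin n)) :
    Integrable (fun p : Ω × Ω' => |inner ℝ u (tensorE (X p.1) (Y p.2))|) (μ.prod ν) := by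
  have hmeas : AEStronglyMeasurable (fun p : Ω × Ω' => (X p.1, Y p.2)) (μ.prod ν) :=
    hX.1.comp_fst.prodMk hY.1.comp_snd
  have hg := (continuous_abs_inner_tensorE u).comp_aestronglyMeasurable hmeas
  refine ((hX.norm.mul_prod hY.norm).const_mul ‖u‖).mono hg (ae_of_all _ fun p => ?_)
  rw [norm_abs_eq_norm, ← norm_tensorE]
  exact (norm_inner_le_norm _ _).trans (Real.le_norm_self _)

theorem suppFn_prod_tensorE_eq_integral_suppFn_contractE [SFinite μ] [SFinite ν]
    {X : Ω → EuclideanSpace ℝ (Fin m)} {Y : Ω' → EuclideanSpace ℝ (Fin n)}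
    (hX : Integrable X μ) (hY : Integrable Y ν) (u : EuclideanSpace ℝ (Fin m × Fin n)) :
    suppFn (μ.prod ν) (fun p => tensorE (X p.1) (Y p.2)) u
      = ∫ ω', suppFn μ X (contractE (Y ω') u) ∂ν := by
  rw [suppFn, integral_prod_symm _ (integrable_abs_inner_tensorE_prod hX hY u)]
  simp only [suppFn, integral_const_mul, inner_tensorE_eq_inner_contractE]

theorem suppFn_prod_tensorE_eq_integral_suppFn_contractLeftE [SFinite μ] [SFinite ν]
    {X : Ω → EuclideanSpace ℝ (Fin m)} {Y : Ω' → EuclideanSpace ℝ (Fin n)}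
    (hX : Integrable X μ) (hY : Integrable Y ν) (u : EuclideanSpace ℝ (Fin m × Fin n)) :
    suppFn (μ.prod ν) (fun p => tensorE (X p.1) (Y p.2)) u
      = ∫ ω, suppFn ν Y (contractLeftE (X ω) u) ∂μ := by
  rw [suppFn, integral_prod _ (integrable_abs_inner_tensorE_prod hX hY u)]
  simp only [suppFn, integral_const_mul, inner_tensorE_eq_inner_contractLeftE]

theorem suppFn_prod_tensorE_congr [SFinite μ] [SFinite ν]
    {X X' : Ω → EuclideanSpace ℝ (Fin m)} {Y Y' : Ω' → EuclideanSpace ℝ (Fin n)}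
    (hX : Integrable X μ) (hX' : Integrable X' μ) (hY : Integrable Y ν) (hY' : Integrable Y' ν)
    (hXX' : ∀ v, suppFn μ X' v = suppFn μ X v) (hYY' : ∀ w, suppFn ν Y' w = suppFn ν Y w)
    (u : EuclideanSpace ℝ (Fin m × Fin n)) :
    suppFn (μ.prod ν) (fun p => tensorE (X' p.1) (Y' p.2)) u
      = suppFn (μ.prod ν) (fun p => tensorE (X p.1) (Y p.2)) u := calc
  _ = ∫ ω', suppFn μ X (contractE (Y' ω') u) ∂ν := by
    simp only [suppFn_prod_tensorE_eq_integral_suppFn_contractE hX' hY', hXX']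
  _ = ∫ ω, suppFn ν Y (contractLeftE (X ω) u) ∂μ := by
    simp only [← suppFn_prod_tensorE_eq_integral_suppFn_contractE hX hY',
      suppFn_prod_tensorE_eq_integral_suppFn_contractLeftE hX hY', hYY']
  _ = _ := (suppFn_prod_tensorE_eq_integral_suppFn_contractLeftE hX hY u).symm

end ZonoidTensor

theorem stmt8 {Ω : Type*} [MeasurableSpace Ω] (μ : Measure Ω) [IsProbabilityMeasure μ]
    {m n : ℕ} (X : Ω → EuclideanSpace ℝ (Fin m)) (Y : Ω → EuclideanSpace ℝ (Fin n))
    (hX : Integrable X μ) (hY : Integrable Y μ)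
    (hXm : Measurable X) (hYm : Measurable Y)
    (hindep : IndepFun X Y μ) :
    (∀ u : EuclideanSpace ℝ (Fin m × Fin n),
        suppFn μ (fun ω => tensorE (X ω) (Y ω)) u
          = ∫ ω, suppFn μ X (contractE (Y ω) u) ∂μ) ∧
    (∀ (X' : Ω → EuclideanSpace ℝ (Fin m)) (Y' : Ω → EuclideanSpace ℝ (Fin n)),
        Integrable X' μ → Integrable Y' μ → Measurable X' → Measurable Y' →
        IndepFun X' Y' μ →
        (∀ v, suppFn μ X' v = suppFn μ X v) → (∀ w, suppFn μ Y' w = suppFn μ Y w) →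
        ∀ u, suppFn μ (fun ω => tensorE (X' ω) (Y' ω)) u
              = suppFn μ (fun ω => tensorE (X ω) (Y ω)) u) := by
  refine ⟨fun u => ?_, fun X' Y' hX' hY' hX'm hY'm hX'Y' hXX' hYY' u => ?_⟩
  · rw [suppFn_tensorE_eq_suppFn_prod_of_indepFun hXm hYm hindep,
      suppFn_prod_tensorE_eq_integral_suppFn_contractE hX hY]
  · rw [suppFn_tensorE_eq_suppFn_prod_of_indepFun hX'm hY'm hX'Y',
      suppFn_tensorE_eq_suppFn_prod_of_indepFun hXm hYm hindep]
    exact suppFn_prod_tensorE_congr hX hX' hY hY' hXX' hYY' u
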